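/- For even n ≥ 4, the radio number of the Cartesian product P_n □ P of the path on n vertices with the Petersen graph equals 5n² − n + 1. -/

import Mathlib

open SimpleGraph Finset

/-- The Petersen graph as the Kneser graph K(5,2). -/
def petersen : SimpleGraph {s : Finset (Fin 5) // s.card = 2} where
  Adj a b := Disjoint a.1 b.1
  symm := ⟨fun _ _ h => h.symm⟩
  loopless := ⟨fun a h => by
    have h0 : a.1 = ⊥ := disjoint_self.mp h
    have h2 := a.2
    rw [h0] at h2
    simp at h2⟩

/-- A radio labeling of `G`: for all distinct `u, v`,
`d(u,v) + |φ(u) - φ(v)| ≥ diam(G) + 1`. -/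
def IsRadioLabeling {V : Type*} (G : SimpleGraph V) (φ : V → ℕ) : Prop :=
  ∀ u v : V, u ≠ v → (G.diam : ℤ) + 1 ≤ (G.dist u v : ℤ) + |(φ u : ℤ) - (φ v : ℤ)|

/-- The span of a labeling: the maximum difference between two labels. -/
noncomputable def span {V : Type*} (φ : V → ℕ) : ℕ :=
  sSup (Set.range fun p : V × V => φ p.1 - φ p.2)

/-- The radio number of `G`: the minimum span over all radio labelings. -/
noncomputable def radioNumber {V : Type*} (G : SimpleGraph V) : ℕ :=
  sInf {s | ∃ φ : V → ℕ, IsRadioLabeling G φ ∧ span φ = s}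

/-- `d(v, S)`: the minimum distance from `v` to a vertex of `S`. -/
noncomputable def distToSet {V : Type*} (G : SimpleGraph V) (v : V) (S : Finset V) : ℕ :=
  sInf ((fun w => G.dist v w) '' ↑S)

/-- `diam(S)`: the maximum distance in `G` between two vertices of `S`. -/
noncomputable def setDiam {V : Type*} (G : SimpleGraph V) (S : Finset V) : ℕ :=
  sSup {d | ∃ x ∈ S, ∃ y ∈ S, G.dist x y = d}

/-!
Write `n = 2m`. Lower bound (level-function method): list the vertices `x₀, …, x_{N-1}` by
increasing label. Each step costs `φ x_{i+1} - φ x_i ≥ diam + 1 - d(x_i, x_{i+1})`, and in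
`P_{2m} □ P` every distance satisfies `d(u, v) ≤ L u + L v + 3`, where `L` is the distance of the
path coordinate to the central pair `{m - 1, m}`. Summing along the list, every vertex except the
two ends is counted twice, so `span ≥ (N - 1)(diam - 2) - 2 ∑ L = (20m - 1)(2m - 1) - 20m(m - 1)`,
which is `20m² - 2m + 1 = 5n² - n + 1`.

Upper bound: arrange the vertices in `20m` positions, `m` blocks of `20`: block `b` alternates
between path level `m - 1 - b` (even positions) and level `2m - 1 - b` (odd positions), while the
Petersen coordinate follows a fixed closed tour of length `20` in which entries one or two steps
apart are at distance `2`. Labelling position `s` by `m s - ⌊s / 20⌋` then meets the radio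
condition, with span `20m² - 2m + 1`.
-/

section RadioLabeling

variable {V : Type*} {G : SimpleGraph V}

lemma sub_le_span [Finite V] (φ : V → ℕ) (u v : V) : φ u - φ v ≤ span φ :=
  le_csSup (Set.finite_range _).bddAbove ⟨(u, v), rfl⟩

lemma span_le {φ : V → ℕ} {k : ℕ} (h : ∀ v, φ v ≤ k) : span φ ≤ k :=
  csSup_le' <| by rintro _ ⟨⟨u, v⟩, rfl⟩; exact (Nat.sub_le _ _).trans (h u)

lemma radioNumber_eq {k : ℕ} {φ : V → ℕ} (hφ : IsRadioLabeling G φ) (hk : span φ ≤ k)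
    (hlow : ∀ ψ, IsRadioLabeling G ψ → k ≤ span ψ) : radioNumber G = k :=
  le_antisymm (Nat.sInf_le ⟨φ, hφ, le_antisymm hk (hlow φ hφ)⟩)
    (le_csInf ⟨_, φ, hφ, rfl⟩ fun _ ⟨ψ, hψ, hs⟩ => hs ▸ hlow ψ hψ)

namespace IsRadioLabeling

variable {φ : V → ℕ}

lemma injective (hφ : IsRadioLabeling G φ) (hG : G.ediam ≠ ⊤) : Function.Injective φ := by
  intro u v huv
  by_contra hne
  have h := hφ u v hne
  have := G.dist_le_diam hG (u := u) (v := v)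
  rw [huv, sub_self, abs_zero, add_zero] at h
  omega

lemma diam_add_one_le_of_lt (hφ : IsRadioLabeling G φ) {u v : V} (h : φ u < φ v) :
    (G.diam : ℤ) + 1 ≤ G.dist u v + φ v - φ u := by
  have := hφ u v (fun huv => h.ne (congrArg φ huv))
  rw [abs_sub_comm, abs_of_pos (by omega)] at this
  linarith

lemma length_mul_le_of_isChain (hφ : IsRadioLabeling G φ) {L : V → ℕ} {c : ℕ}
    (hL : ∀ u v, G.dist u v ≤ L u + L v + c) :
    ∀ (a : V) (l : List V), (a :: l).IsChain (fun u v => φ u < φ v) →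
      (l.length : ℤ) * (G.diam + 1 - c) + L a + L (l.getLastD a) ≤
        φ (l.getLastD a) - φ a + 2 * ((a :: l).map fun v => (L v : ℤ)).sum
  | a, [], _ => by simp [two_mul]
  | a, b :: l, h => by
    rw [List.isChain_cons_cons] at h
    have ih := length_mul_le_of_isChain hφ hL b l h.2
    have hab := hφ.diam_add_one_le_of_lt h.1
    have := hL a b
    simp only [List.getLastD_cons, List.length_cons, List.map_cons, List.sum_cons] at ih ⊢
    push_cast at *
    linarith

theorem le_span_of_dist_le (hφ : IsRadioLabeling G φ) [Fintype V] [Nonempty V]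
    (hG : G.ediam ≠ ⊤) (L : V → ℕ) (c : ℕ) (hL : ∀ u v, G.dist u v ≤ L u + L v + c) :
    ((Fintype.card V : ℤ) - 1) * (G.diam + 1 - c) - 2 * ∑ v, (L v : ℤ) ≤ span φ := by
  -- order `V` by label, so that `univ.sort` lists the vertices by increasing label
  let : LinearOrder V := LinearOrder.lift' φ (hφ.injective hG)
  have hlen : (Finset.univ.sort (· ≤ ·) : List V).length = Fintype.card V := by simp
  obtain ⟨a, l, hl⟩ := List.exists_cons_of_length_pos (hlen ▸ Fintype.card_pos)
  have hchain : (a :: l).IsChain (fun u v => φ u < φ v) := hl ▸ (Finset.sortedLT_sort _).isChain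
  rw [hl, List.length_cons] at hlen
  have hsum : ((a :: l).map fun v => (L v : ℤ)).sum = ∑ v, (L v : ℤ) := by
    rw [← hl, ← List.sum_toFinset _ (Finset.sort_nodup _ _), Finset.sort_toFinset]
  have key := hφ.length_mul_le_of_isChain hL a l hchain
  have hspan : (φ (l.getLastD a) : ℤ) - φ a ≤ span φ := by
    have := sub_le_span φ (l.getLastD a) a
    omega
  rw [hsum] at key
  rw [show (Fintype.card V : ℤ) - 1 = l.length by omega]
  linarith

end IsRadioLabeling

end RadioLabeling

namespace SimpleGraph

variable {V W : Type*} {G : SimpleGraph V} {H : SimpleGraph W}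

lemma abs_sub_le_length_of_adj {f : V → ℤ} (hf : ∀ a b, G.Adj a b → |f a - f b| ≤ 1) :
    ∀ {u v : V} (w : G.Walk u v), |f u - f v| ≤ w.length
  | _, _, .nil => by simp
  | u, v, .cons (v := w) h p => by
    have := abs_sub_le_length_of_adj hf p
    have := abs_sub_le (f u) (f w) (f v)
    rw [Walk.length_cons]
    push_cast
    linarith [hf _ _ h]

lemma abs_sub_le_dist_of_adj {f : V → ℤ} (hf : ∀ a b, G.Adj a b → |f a - f b| ≤ 1) {u v : V}
    (h : G.Reachable u v) : |f u - f v| ≤ G.dist u v := by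
  obtain ⟨w, hw⟩ := h.exists_walk_length_eq_dist
  exact hw ▸ abs_sub_le_length_of_adj hf w

lemma dist_boxProd (hG : G.Preconnected) (hH : H.Preconnected) (x y : V × W) :
    (G □ H).dist x y = G.dist x.1 y.1 + H.dist x.2 y.2 := by
  rw [dist, dist, dist, edist_boxProd, ENat.toNat_add (edist_ne_top_iff_reachable.mpr (hG _ _))
    (edist_ne_top_iff_reachable.mpr (hH _ _))]

lemma diam_eq_of_dist_le [Finite V] (hG : G.Connected) {k : ℕ} (hle : ∀ u v, G.dist u v ≤ k)
    {u v : V} (huv : G.dist u v = k) : G.diam = k := by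
  have := hG.nonempty
  obtain ⟨a, b, hab⟩ := G.exists_dist_eq_diam
  exact le_antisymm (hab ▸ hle a b) (huv ▸ dist_le_diam (connected_iff_ediam_ne_top.mp hG))

lemma pathGraph_edist_le {n : ℕ} (i j : Fin n) : (pathGraph n).edist i j ≤ Nat.dist i j := by
  wlog hij : i ≤ j generalizing i j
  · rw [edist_comm, Nat.dist_comm]; exact this j i (le_of_not_ge hij)
  obtain ⟨d, hd⟩ := Nat.exists_eq_add_of_le (Fin.le_def.mp hij)
  induction d generalizing j with
  | zero => simp [Fin.ext (hd.trans (add_zero _)).symm]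
  | succ d ih =>
    have hk : (i : ℕ) + d < n := by omega
    have hadj : (pathGraph n).Adj ⟨i + d, hk⟩ j := by rw [pathGraph_adj]; simp only; omega
    calc (pathGraph n).edist i j ≤ (pathGraph n).edist i ⟨i + d, hk⟩ + 1 :=
          SimpleGraph.edist_triangle.trans (add_le_add_right (edist_eq_one_iff_adj.mpr hadj).le _)
      _ ≤ Nat.dist i (i + d) + 1 := by gcongr; exact ih _ (Fin.le_def.mpr (by simp)) rfl
      _ = Nat.dist i j := by simp [Nat.dist, hd]

lemma pathGraph_dist {n : ℕ} (i j : Fin n) : (pathGraph n).dist i j = Nat.dist i j := by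
  refine le_antisymm ?_ ?_
  · exact ENat.toNat_le_of_le_natCast (pathGraph_edist_le i j)
  · have := abs_sub_le_dist_of_adj (G := pathGraph n) (f := fun i => (i : ℤ)) ?_
      (pathGraph_preconnected n i j)
    · rcases abs_cases ((i : ℤ) - j) with ⟨h, _⟩ | ⟨h, _⟩ <;> simp only [Nat.dist] <;> omega
    · intro a b h; rw [pathGraph_adj] at h; rw [abs_le]; omega

end SimpleGraph

abbrev PetersenVertex := {s : Finset (Fin 5) // s.card = 2}

instance : Nonempty PetersenVertex := ⟨⟨{0, 1}, rfl⟩⟩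

lemma card_petersenVertex : Fintype.card PetersenVertex = 10 := rfl

lemma petersen_exists_walk_length_le_two (a b : PetersenVertex) :
    ∃ w : petersen.Walk a b, w.length ≤ 2 := by
  -- two distinct non-adjacent vertices share one point; the complement of their union is a
  -- common neighbour
  have : ∀ a b : PetersenVertex, a = b ∨ Disjoint a.1 b.1 ∨
      ∃ c : PetersenVertex, Disjoint a.1 c.1 ∧ Disjoint c.1 b.1 := by decide
  rcases this a b with rfl | hab | ⟨c, hac, hcb⟩
  · exact ⟨.nil, by simp⟩
  · exact ⟨.cons (show petersen.Adj a b from hab) .nil, by simp⟩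
  · exact ⟨.cons (show petersen.Adj a c from hac) (.cons (show petersen.Adj c b from hcb) .nil),
      by simp⟩

lemma petersen_connected : petersen.Connected :=
  ⟨fun a b => ⟨(petersen_exists_walk_length_le_two a b).choose⟩⟩

lemma petersen_dist_le_two (a b : PetersenVertex) : petersen.dist a b ≤ 2 :=
  let ⟨w, hw⟩ := petersen_exists_walk_length_le_two a b
  (dist_le w).trans hw

lemma petersen_dist_eq_two {a b : PetersenVertex} (h : (a.1 ∩ b.1).card = 1) :
    petersen.dist a b = 2 := by
  have hne : a ≠ b := by rintro rfl; simp [a.2] at h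
  have hnadj : ¬ petersen.Adj a b := by
    intro hadj
    simp [Finset.disjoint_iff_inter_eq_empty.mp hadj] at h
  have := petersen_connected.pos_dist_of_ne hne
  have := petersen_dist_le_two a b
  have := mt dist_eq_one_iff_adj.mp hnadj
  omega

section PathBoxPetersen

variable {n : ℕ}

lemma pathGraph_boxProd_petersen_dist (x y : Fin n × PetersenVertex) :
    (pathGraph n □ petersen).dist x y = Nat.dist x.1 y.1 + petersen.dist x.2 y.2 := by
  rw [dist_boxProd (pathGraph_preconnected n) petersen_connected.preconnected, pathGraph_dist]

lemma pathGraph_boxProd_petersen_connected (hn : 1 ≤ n) : (pathGraph n □ petersen).Connected :=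
  have : Nonempty (Fin n) := ⟨⟨0, hn⟩⟩
  (⟨pathGraph_preconnected n⟩ : (pathGraph n).Connected).boxProd petersen_connected

lemma pathGraph_boxProd_petersen_diam (hn : 1 ≤ n) : (pathGraph n □ petersen).diam = n + 1 := by
  refine diam_eq_of_dist_le (pathGraph_boxProd_petersen_connected hn) (fun u v => ?_)
    (u := (⟨0, hn⟩, ⟨{0, 1}, rfl⟩)) (v := (⟨n - 1, by omega⟩, ⟨{0, 2}, rfl⟩)) ?_
  · have := petersen_dist_le_two u.2 v.2
    rw [pathGraph_boxProd_petersen_dist]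
    simp only [Nat.dist]
    omega
  · rw [pathGraph_boxProd_petersen_dist, petersen_dist_eq_two rfl]
    simp only [Nat.dist]
    omega

end PathBoxPetersen

section LowerBound

/-- The distance in `P_{2m}` from `i` to the nearer of the two central vertices `m - 1` and `m`
(one of the two truncated differences is always zero). -/
def centerDist (m i : ℕ) : ℕ := (m - 1 - i) + (i - m)

lemma dist_le_centerDist_add_centerDist (m i j : ℕ) :
    Nat.dist i j ≤ centerDist m i + centerDist m j + 1 := by
  simp only [Nat.dist, centerDist]
  omega

lemma sum_centerDist (m : ℕ) : ∑ i ∈ range (2 * m), centerDist m i = m * (m - 1) := by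
  have hlow : ∑ i ∈ range m, centerDist m i = ∑ i ∈ range m, i := by
    rw [← sum_range_reflect]
    exact sum_congr rfl fun i hi => by simp only [centerDist, mem_range] at hi ⊢; omega
  have hhigh : ∑ i ∈ range m, centerDist m (m + i) = ∑ i ∈ range m, i :=
    sum_congr rfl fun i _ => by simp only [centerDist]; omega
  rw [two_mul, sum_range_add, hlow, hhigh, ← sum_range_id_mul_two, mul_two]

lemma le_span_pathGraph_boxProd_petersen {m : ℕ} (hm : 1 ≤ m)
    {φ : Fin (2 * m) × PetersenVertex → ℕ} (hφ : IsRadioLabeling (pathGraph (2 * m) □ petersen) φ) :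
    20 * m ^ 2 - 2 * m + 1 ≤ span φ := by
  have : NeZero (2 * m) := ⟨by omega⟩
  have key := hφ.le_span_of_dist_le
    (connected_iff_ediam_ne_top.mp (pathGraph_boxProd_petersen_connected (by omega)))
    (fun v => centerDist m v.1) 3 fun u v => by
      rw [pathGraph_boxProd_petersen_dist]
      linarith [petersen_dist_le_two u.2 v.2, dist_le_centerDist_add_centerDist m u.1 v.1]
  have hsum : ∑ v : Fin (2 * m) × PetersenVertex, (centerDist m v.1 : ℤ) =
      10 * (m * (m - 1) : ℕ) := by
    simp only [Fintype.sum_prod_type, sum_const, card_univ, card_petersenVertex, nsmul_eq_mul]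
    rw [← mul_sum, ← sum_centerDist, ← Fin.sum_univ_eq_sum_range]
    push_cast
    rfl
  rw [hsum, pathGraph_boxProd_petersen_diam (by omega), Fintype.card_prod, Fintype.card_fin,
    card_petersenVertex] at key
  have : 2 * m ≤ 20 * m ^ 2 := by nlinarith
  zify [this]
  push_cast [Nat.cast_sub hm] at key ⊢
  linarith

end LowerBound

section Construction

/-- Every 2-subset occurs once at an even and once at an odd index, and entries one or two steps
apart (cyclically) share exactly one point, i.e. are at distance 2 in `petersen`. -/
def petersenTour : List (Finset (Fin 5)) :=
  [{0,1}, {0,2}, {0,3}, {0,1}, {0,2}, {0,3}, {0,4}, {3,4}, {2,4}, {1,4},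
   {1,2}, {1,3}, {2,3}, {1,2}, {1,3}, {2,3}, {3,4}, {2,4}, {1,4}, {0,4}]

def tourAt (s : ℕ) : Finset (Fin 5) := petersenTour.getD (s % 20) ∅

def tourSlot (q : Finset (Fin 5)) (p : ℕ) : ℕ :=
  (List.range 20).findIdx fun r => r % 2 = p ∧ petersenTour.getD r ∅ = q

lemma tourAt_inter_card (s : ℕ) :
    #(tourAt s ∩ tourAt (s + 1)) = 1 ∧ #(tourAt s ∩ tourAt (s + 2)) = 1 := by
  have h : ∀ r < 20, #(petersenTour.getD r ∅ ∩ petersenTour.getD ((r + 1) % 20) ∅) = 1 ∧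
      #(petersenTour.getD r ∅ ∩ petersenTour.getD ((r + 2) % 20) ∅) = 1 := by decide
  have h1 : (s + 1) % 20 = (s % 20 + 1) % 20 := by omega
  have h2 : (s + 2) % 20 = (s % 20 + 2) % 20 := by omega
  rw [tourAt, tourAt, tourAt, h1, h2]
  exact h _ (Nat.mod_lt _ (by norm_num))

lemma tourAt_tourSlot (q : PetersenVertex) {p : ℕ} (hp : p < 2) (k : ℕ) :
    tourSlot q p < 20 ∧ tourSlot q p % 2 = p ∧ tourAt (20 * k + tourSlot q p) = q := by
  have h : ∀ q : Finset (Fin 5), #q = 2 → ∀ p < 2, tourSlot q p < 20 ∧ tourSlot q p % 2 = p ∧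
      petersenTour.getD (tourSlot q p) ∅ = q := by decide
  obtain ⟨hlt, hpar, hq⟩ := h q.1 q.2 p hp
  refine ⟨hlt, hpar, ?_⟩
  rwa [tourAt, show (20 * k + tourSlot q p) % 20 = tourSlot q p by omega]

variable {m : ℕ}

/-- The position of the vertex `(i, q)` in the labelling order: the inverse of
`s ↦ (levelAt m s, tourAt s)` on `s < 20 * m`. -/
def position (m i : ℕ) (q : Finset (Fin 5)) : ℕ :=
  if i < m then 20 * (m - 1 - i) + tourSlot q 0 else 20 * (2 * m - 1 - i) + tourSlot q 1

def levelAt (m s : ℕ) : ℕ := if s % 2 = 0 then m - 1 - s / 20 else 2 * m - 1 - s / 20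

def labelAt (m s : ℕ) : ℕ := m * s - s / 20

lemma position_spec {i : ℕ} (hi : i < 2 * m) (q : PetersenVertex) :
    position m i q < 20 * m ∧ levelAt m (position m i q) = i ∧ tourAt (position m i q) = q := by
  by_cases h : i < m
  · obtain ⟨hlt, hpar, hq⟩ := tourAt_tourSlot q (p := 0) (by norm_num) (m - 1 - i)
    simp only [position, if_pos h]
    exact ⟨by omega, by rw [levelAt, if_pos (by omega)]; omega, hq⟩
  · obtain ⟨hlt, hpar, hq⟩ := tourAt_tourSlot q (p := 1) (by norm_num) (2 * m - 1 - i)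
    simp only [position, if_neg h]
    exact ⟨by omega, by rw [levelAt, if_neg (by omega)]; omega, hq⟩

lemma labelAt_le (hm : 1 ≤ m) {s : ℕ} (hs : s < 20 * m) :
    labelAt m s ≤ 20 * m ^ 2 - 2 * m + 1 := by
  obtain ⟨b, r, hr, rfl⟩ : ∃ b r, r < 20 ∧ s = 20 * b + r := ⟨s / 20, s % 20, by omega, by omega⟩
  have hb : b + 1 ≤ m := by omega
  have hdiv : (20 * b + r) / 20 = b := by omega
  have h1 : 2 * m ≤ 20 * m ^ 2 := by nlinarith
  have h2 : b ≤ m * (20 * b + r) := by nlinarith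
  rw [labelAt, hdiv]
  zify [h1, h2]
  nlinarith

/-- The radio condition for the vertices at positions `s < t`, at distance `D`. -/
lemma add_le_labelAt_add (hm : 2 ≤ m) {s t : ℕ} (hst : s < t) (ht : t < 20 * m) {D : ℕ}
    (hD : 1 ≤ D)
    (hD2 : #(tourAt s ∩ tourAt t) = 1 → Nat.dist (levelAt m s) (levelAt m t) + 2 ≤ D) :
    2 * m + 2 + labelAt m s ≤ D + labelAt m t := by
  obtain ⟨d, rfl⟩ := Nat.exists_eq_add_of_lt hst
  have hlab : labelAt m (s + d + 1) + (s + d + 1) / 20 = labelAt m s + s / 20 + m * (d + 1) := by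
    have := Nat.le_mul_of_pos_left s (by omega : 0 < m)
    have := Nat.le_mul_of_pos_left (d + 1) (by omega : 0 < m)
    simp only [labelAt, mul_add m s, show s + d + 1 = s + (d + 1) by omega]
    omega
  obtain rfl | rfl | hd : d = 0 ∨ d = 1 ∨ 2 ≤ d := by omega
  · have h := hD2 (tourAt_inter_card s).1
    simp only [levelAt, Nat.dist] at h
    split_ifs at h <;> omega
  · have h := hD2 (tourAt_inter_card s).2
    simp only [levelAt, Nat.dist] at h
    split_ifs at h <;> omega
  · have : 3 * m ≤ m * (d + 1) := by nlinarith
    have : 2 * (d + 1) ≤ m * (d + 1) := by nlinarith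
    omega

def radioLabel (m : ℕ) (v : Fin (2 * m) × PetersenVertex) : ℕ := labelAt m (position m v.1 v.2)

lemma isRadioLabeling_radioLabel (hm : 2 ≤ m) :
    IsRadioLabeling (pathGraph (2 * m) □ petersen) (radioLabel m) := by
  intro u v huv
  obtain ⟨hu, hlu, htu⟩ := position_spec u.1.2 u.2
  obtain ⟨hv, hlv, htv⟩ := position_spec v.1.2 v.2
  have hne : position m u.1 u.2 ≠ position m v.1 v.2 := fun h =>
    huv <| Prod.ext (Fin.ext <| by rw [← hlu, ← hlv, h]) (Subtype.ext <| by rw [← htu, ← htv, h])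
  wlog hlt : position m u.1 u.2 < position m v.1 v.2 generalizing u v
  · rw [dist_comm, abs_sub_comm]
    exact this v u huv.symm hv hlv htv hu hlu htu hne.symm (hne.lt_or_gt.resolve_left hlt)
  have key := add_le_labelAt_add hm hlt hv (D := (pathGraph (2 * m) □ petersen).dist u v)
    ((pathGraph_boxProd_petersen_connected (by omega)).pos_dist_of_ne huv) fun h => by
      rw [pathGraph_boxProd_petersen_dist, petersen_dist_eq_two (htu ▸ htv ▸ h), hlu, hlv]
  rw [pathGraph_boxProd_petersen_diam (by omega), radioLabel, radioLabel, abs_sub_comm]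
  have := le_abs_self ((labelAt m (position m v.1 v.2) : ℤ) - labelAt m (position m u.1 u.2))
  push_cast
  omega

lemma span_radioLabel_le (hm : 1 ≤ m) : span (radioLabel m) ≤ 20 * m ^ 2 - 2 * m + 1 :=
  span_le fun v => labelAt_le hm (position_spec v.1.2 v.2).1

end Construction

theorem stmt_8 (n : ℕ) (hn : 4 ≤ n) (he : Even n) :
    radioNumber (pathGraph n □ petersen) = 5 * n ^ 2 - n + 1 := by
  obtain ⟨m, rfl⟩ := he
  have hm : 2 ≤ m := by omega
  rw [← two_mul, show 5 * (2 * m) ^ 2 = 20 * m ^ 2 by ring]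
  exact radioNumber_eq (isRadioLabeling_radioLabel hm) (span_radioLabel_le (by omega))
    fun ψ hψ => le_span_pathGraph_boxProd_petersen (by omega) hψ
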